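/- arXiv:1907.04172 — 4 statements merged into one kernel-verified Lean document; each statement's English description precedes it below -/
import Mathlib

section
/- Let w ≥ 0 be an integer. In the formal power series ring ℤ[q][[t]], the generating function of tangent-type path diagrams bounded in a slit of width w equals the finite continued fraction G_w(t,q): that is, Σ_{N=0}^∞ t^{2N} · Σ_u Σ_s q^{weight(s)} = G_w(t,q), where the middle sum runs over all Dyck paths u of half-length N with height at most w and the inner sum runs over all tangent-type path diagrams s on u. -/
/-!
Summing over the diagrams on a fixed Dyck path factorises: a step starting at height `h`
contributes `[h+1]_q`. So the coefficient of `t^n` is the weighted number of paths of length `n`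
in the strip `[0, w]`, and the generating functions `g_k` of such paths ending at height `k`
satisfy the transfer-matrix system `g_k = δ_{k0} + t ([k]_q g_{k-1} + [k+2]_q g_{k+1})`,
`g_{w+1} = 0`, which has a unique solution in `ℤ[q][[t]]`. Writing `E_i = 1 / h_{i+1}` for the
generating function of excursions from `i` confined to `[i, w]`, the continued fraction gives
`E_i = 1 + [i+1]_q [i+2]_q t² E_{i+1} E_i`, and this makes
`g_k = t^k [k]_q! E_0 E_1 ⋯ E_k` a solution. In particular `g_0 = E_0 = G_w`.
-/

open Finset

/-- The `q`-integer `[n]_q = 1 + q + ⋯ + q^{n-1}` in `ℤ[q]`. -/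
noncomputable def qInt (n : ℕ) : Polynomial ℤ := ∑ i ∈ Finset.range n, Polynomial.X ^ i

/-- A step, encoded by a Boolean: `true` is a `+1` (northeast) step, `false` a `-1`
(southeast) step. -/
def stepVal (b : Bool) : ℤ := if b then 1 else -1

/-- The partial sum `u_1 + ⋯ + u_j` of the first `j` steps; `psum u j` is the
starting height of step `j+1`. -/
def psum {n : ℕ} (u : Fin n → Bool) (j : ℕ) : ℤ :=
  ∑ i ∈ Finset.univ.filter (fun i : Fin n => (i : ℕ) < j), stepVal (u i)

/-- `u` is a Dyck path of half-length `N` whose height is at most `w`: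
all partial sums are nonnegative, the total sum is `0`, and all partial sums are `≤ w`. -/
def IsDyckLe (N w : ℕ) (u : Fin (2 * N) → Bool) : Prop :=
  (∀ j ≤ 2 * N, 0 ≤ psum u j) ∧ psum u (2 * N) = 0 ∧ (∀ j ≤ 2 * N, psum u j ≤ (w : ℤ))

/-- `s` is a tangent-type path diagram on the Dyck path `u`: `0 ≤ s_j ≤ h_j` for every
step `j` (the upper bound `2N` on the codomain of `s` is harmless since `h_j ≤ 2N`). -/
def IsTangentDiagram {N : ℕ} (u : Fin (2 * N) → Bool) (s : Fin (2 * N) → Fin (2 * N + 1)) :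
    Prop :=
  ∀ j : Fin (2 * N), ((s j : ℕ) : ℤ) ≤ psum u (j : ℕ)

open scoped Classical in
/-- The generating function `Σ_N t^{2N} Σ_u Σ_s q^{weight(s)} ∈ ℤ[q][[t]]`, where `u` runs
over Dyck paths of half-length `N` of height at most `w` and `s` over tangent-type path
diagrams on `u`. -/
noncomputable def tangentGF (w : ℕ) : PowerSeries (Polynomial ℤ) :=
  PowerSeries.mk fun n =>
    if n % 2 = 0 then
      ∑ p ∈ Finset.univ.filter
          (fun p : (Fin (2 * (n / 2)) → Bool) × (Fin (2 * (n / 2)) → Fin (2 * (n / 2) + 1)) =>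
            IsDyckLe (n / 2) w p.1 ∧ IsTangentDiagram p.1 p.2),
        Polynomial.X ^ (∑ j, (p.2 j : ℕ))
    else 0

/-- `hAux w k` is the continued-fraction level `h_{w+1-k}`:
`h_{w+1} = 1` and `h_j = 1 - [j]_q [j+1]_q t² / h_{j+1}` for `1 ≤ j ≤ w`. -/
noncomputable def hAux (w : ℕ) : ℕ → PowerSeries (Polynomial ℤ)
  | 0 => 1
  | k + 1 => 1 - PowerSeries.C (qInt (w - k) * qInt (w - k + 1)) *
      PowerSeries.X ^ 2 * Ring.inverse (hAux w k)

/-- The finite continued fraction `G_w(t,q) = 1 / h_1 ∈ ℤ[q][[t]]`. -/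
noncomputable def Gcf (w : ℕ) : PowerSeries (Polynomial ℤ) := Ring.inverse (hAux w w)

lemma qInt_zero : qInt 0 = 0 := by simp [qInt]

lemma sum_pow_filter_le_eq_qInt {m h : ℕ} (hh : h ≤ m) :
    ∑ x ∈ univ.filter (fun x : Fin (m + 1) => (x : ℕ) ≤ h),
      (Polynomial.X : Polynomial ℤ) ^ (x : ℕ) = qInt (h + 1) := by
  rw [sum_filter, Fin.sum_univ_eq_sum_range (fun i => if i ≤ h then Polynomial.X ^ i else 0),
    ← sum_filter, qInt]
  congr 1
  ext i
  simp only [mem_filter, mem_range]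
  omega

section Paths

variable {n : ℕ}

lemma psum_zero (u : Fin n → Bool) : psum u 0 = 0 := by
  simp [psum]

lemma psum_snoc (v : Fin n → Bool) (b : Bool) (j : ℕ) :
    psum (Fin.snoc v b : Fin (n + 1) → Bool) j = psum v j + if n < j then stepVal b else 0 := by
  simp [psum, sum_filter, Fin.sum_univ_castSucc]

lemma psum_snoc_of_le (v : Fin n → Bool) (b : Bool) {j : ℕ} (hj : j ≤ n) :
    psum (Fin.snoc v b : Fin (n + 1) → Bool) j = psum v j := by
  simp [psum_snoc, hj.not_gt]

lemma psum_snoc_succ (v : Fin n → Bool) (b : Bool) :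
    psum (Fin.snoc v b : Fin (n + 1) → Bool) (n + 1) = psum v n + stepVal b := by
  rw [psum_snoc, if_pos n.lt_succ_self]
  congr 1
  simp only [psum, Fin.is_lt, Nat.lt_succ_of_lt, filter_true_of_mem, implies_true]

lemma psum_le (u : Fin n → Bool) (j : ℕ) : psum u j ≤ n := by
  calc psum u j ≤ ∑ _i ∈ univ.filter (fun i : Fin n => (i : ℕ) < j), (1 : ℤ) :=
        sum_le_sum fun i _ => by cases u i <;> simp [stepVal]
    _ ≤ ∑ _i : Fin n, (1 : ℤ) := sum_le_sum_of_subset_of_nonneg (filter_subset _ _) (by simp)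
    _ = n := by simp

lemma psum_cast_zmod_two (u : Fin n → Bool) : (psum u n : ZMod 2) = n := by
  have hstep : ∀ b, (stepVal b : ZMod 2) = 1 := by decide
  simp [psum, hstep]

def IsBoundedPath (w : ℕ) (u : Fin n → Bool) : Prop :=
  ∀ j ≤ n, 0 ≤ psum u j ∧ psum u j ≤ w

noncomputable def pathWeight (u : Fin n → Bool) : Polynomial ℤ :=
  ∏ j : Fin n, qInt ((psum u j).toNat + 1)

lemma pathWeight_snoc (v : Fin n → Bool) (b : Bool) :
    pathWeight (Fin.snoc v b : Fin (n + 1) → Bool) =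
      pathWeight v * qInt ((psum v n).toNat + 1) := by
  simp [pathWeight, Fin.prod_univ_castSucc, psum_snoc_of_le, Fin.is_le']

lemma isBoundedPath_snoc_iff {w k : ℕ} (hk : k ≤ w) (v : Fin n → Bool) (b : Bool) :
    (IsBoundedPath w (Fin.snoc v b : Fin (n + 1) → Bool) ∧
        psum (Fin.snoc v b : Fin (n + 1) → Bool) (n + 1) = k) ↔
      IsBoundedPath w v ∧ psum v n + stepVal b = k := by
  rw [psum_snoc_succ]
  refine ⟨fun ⟨hu, hend⟩ => ⟨fun j hj => ?_, hend⟩,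
    fun ⟨hv, hend⟩ => ⟨fun j hj => ?_, hend⟩⟩
  · rw [← psum_snoc_of_le v b hj]
    exact hu j (by omega)
  · rcases hj.lt_or_eq with hj | rfl
    · rw [psum_snoc_of_le v b (by omega)]
      exact hv j (by omega)
    · rw [psum_snoc_succ, hend]
      omega

end Paths

open scoped Classical in
noncomputable def boundedPathSum (w n k : ℕ) : Polynomial ℤ :=
  ∑ u ∈ univ.filter (fun u : Fin n → Bool => IsBoundedPath w u ∧ psum u n = k), pathWeight u

lemma boundedPathSum_zero (w k : ℕ) : boundedPathSum w 0 k = if k = 0 then 1 else 0 := by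
  have hpath : ∀ u : Fin 0 → Bool, IsBoundedPath w u := fun u j hj => by
    simp [Nat.le_zero.mp hj, psum_zero]
  split_ifs with hk <;> simp [boundedPathSum, hpath, psum_zero, pathWeight, eq_comm, hk]

lemma boundedPathSum_eq_zero_of_lt {w k : ℕ} (n : ℕ) (hk : w < k) :
    boundedPathSum w n k = 0 := by
  refine sum_eq_zero fun u hu => absurd hu ?_
  simp only [mem_filter, mem_univ, true_and, not_and]
  intro hu hend
  have := (hu n le_rfl).2
  omega

lemma boundedPathSum_odd (w : ℕ) {n : ℕ} (hn : n % 2 = 1) : boundedPathSum w n 0 = 0 := by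
  refine sum_eq_zero fun u hu => absurd hu ?_
  simp only [mem_filter, mem_univ, true_and, not_and, CharP.cast_eq_zero]
  intro _ hend
  have := psum_cast_zmod_two u
  rw [hend, Int.cast_zero, eq_comm, ZMod.natCast_eq_zero_iff] at this
  omega

/-- At `k = 0` the truncated `k - 1` is harmless: its coefficient is `[0]_q = 0`. -/
lemma boundedPathSum_succ {w k : ℕ} (n : ℕ) (hk : k ≤ w) :
    boundedPathSum w (n + 1) k =
      qInt k * boundedPathSum w n (k - 1) + qInt (k + 2) * boundedPathSum w n (k + 1) := by
  classical
  simp only [boundedPathSum, sum_filter, mul_sum, ← sum_add_distrib]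
  rw [← (Fin.snocEquiv fun _ => Bool).sum_comp, Fintype.sum_prod_type, sum_comm]
  refine sum_congr rfl fun v _ => ?_
  have hsnoc : ∀ b, (Fin.snocEquiv fun _ => Bool) (b, v) = Fin.snoc v b := fun _ => rfl
  simp only [hsnoc, Fintype.sum_bool, isBoundedPath_snoc_iff hk, pathWeight_snoc, stepVal]
  by_cases hv : IsBoundedPath w v
  · obtain ⟨p, hp⟩ := Int.eq_ofNat_of_zero_le (hv n le_rfl).1
    simp only [hv, true_and, hp, Int.toNat_natCast, Bool.false_eq_true, if_true, if_false,
      Nat.cast_inj]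
    split_ifs <;> first
      | omega
      | (rw [show p + 1 = k by omega]; ring)
      | (rw [show p + 1 = k + 2 by omega]; ring)
      | (rw [show k = 0 by omega, qInt_zero]; ring)
      | simp
  · simp [hv]

open scoped Classical in
lemma sum_tangentDiagram_eq_pathWeight {N : ℕ} (u : Fin (2 * N) → Bool)
    (hu : ∀ j ≤ 2 * N, 0 ≤ psum u j) :
    ∑ s ∈ univ.filter (IsTangentDiagram u),
      (Polynomial.X : Polynomial ℤ) ^ (∑ j, (s j : ℕ)) = pathWeight u := by
  set box : Fin (2 * N) → Finset (Fin (2 * N + 1)) :=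
    fun j => univ.filter fun x => (x : ℕ) ≤ (psum u j).toNat
  have hdiagrams : univ.filter (IsTangentDiagram u) = Fintype.piFinset box := by
    ext s
    simp only [box, IsTangentDiagram, mem_filter, mem_univ, true_and, Fintype.mem_piFinset]
    exact forall_congr' fun j => (Int.le_toNat (hu j Fin.is_le')).symm
  simp only [hdiagrams, ← prod_pow_eq_pow_sum, pathWeight]
  rw [← prod_univ_sum box fun _ x => Polynomial.X ^ (x : ℕ)]
  exact prod_congr rfl fun j _ => sum_pow_filter_le_eq_qInt (by have := psum_le u j; omega)

lemma isDyckLe_iff {N w : ℕ} (u : Fin (2 * N) → Bool) :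
    IsDyckLe N w u ↔ IsBoundedPath w u ∧ psum u (2 * N) = ((0 : ℕ) : ℤ) :=
  ⟨fun ⟨hnonneg, hend, hle⟩ => ⟨fun j hj => ⟨hnonneg j hj, hle j hj⟩, hend⟩,
    fun ⟨hu, hend⟩ => ⟨fun j hj => (hu j hj).1, hend, fun j hj => (hu j hj).2⟩⟩

open scoped Classical in
lemma sum_dyckTangentDiagram_eq_boundedPathSum (w N : ℕ) :
    ∑ p ∈ univ.filter (fun p : (Fin (2 * N) → Bool) × (Fin (2 * N) → Fin (2 * N + 1)) =>
        IsDyckLe N w p.1 ∧ IsTangentDiagram p.1 p.2),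
      (Polynomial.X : Polynomial ℤ) ^ (∑ j, (p.2 j : ℕ)) = boundedPathSum w (2 * N) 0 := by
  rw [sum_filter, Fintype.sum_prod_type, boundedPathSum, sum_filter]
  refine sum_congr rfl fun u _ => ?_
  by_cases hu : IsDyckLe N w u
  · simp only [hu, true_and, ← sum_filter, (isDyckLe_iff u).mp hu, if_true]
    exact sum_tangentDiagram_eq_pathWeight u hu.1
  · rw [if_neg (mt (isDyckLe_iff u).mpr hu)]
    exact sum_eq_zero fun s _ => if_neg fun h => hu h.1

open PowerSeries

noncomputable def boundedPathGF (w k : ℕ) : PowerSeries (Polynomial ℤ) :=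
  mk fun n => boundedPathSum w n k

lemma coeff_tangentGF (w n : ℕ) : coeff n (tangentGF w) = coeff n (boundedPathGF w 0) := by
  rw [tangentGF, boundedPathGF, coeff_mk, coeff_mk]
  split_ifs with hn
  · rw [sum_dyckTangentDiagram_eq_boundedPathSum, Nat.mul_div_cancel' (Nat.dvd_of_mod_eq_zero hn)]
  · exact (boundedPathSum_odd w (by omega)).symm

lemma boundedPathGF_of_lt {w k : ℕ} (hk : w < k) : boundedPathGF w k = 0 := by
  ext n
  simp [boundedPathGF, boundedPathSum_eq_zero_of_lt n hk]

lemma boundedPathGF_eq {w k : ℕ} (hk : k ≤ w) :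
    boundedPathGF w k = (if k = 0 then 1 else 0) +
      X * (C (qInt k) * boundedPathGF w (k - 1) + C (qInt (k + 2)) * boundedPathGF w (k + 1)) := by
  ext (_ | n) : 1
  · simp [boundedPathGF, boundedPathSum_zero]
  · split_ifs <;> simp [boundedPathGF, boundedPathSum_succ n hk, coeff_one]

theorem eq_of_tridiagonal_recurrence {R : Type*} [Semiring R] {w : ℕ} {a b : ℕ → R}
    {d f g : ℕ → PowerSeries R} (hf_top : f (w + 1) = 0) (hg_top : g (w + 1) = 0)
    (hf : ∀ k ≤ w, f k = d k + X * (C (a k) * f (k - 1) + C (b k) * f (k + 1)))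
    (hg : ∀ k ≤ w, g k = d k + X * (C (a k) * g (k - 1) + C (b k) * g (k + 1)))
    {k : ℕ} (hk : k ≤ w) : f k = g k := by
  suffices hcoeff : ∀ n, ∀ k ≤ w + 1, coeff n (f k) = coeff n (g k) from
    ext fun n => hcoeff n k (by omega)
  intro n
  induction n with
  | zero =>
    intro k hk
    rcases hk.lt_or_eq with hk | rfl
    · simp [hf k (by omega), hg k (by omega)]
    · rw [hf_top, hg_top]
  | succ n ih =>
    intro k hk
    rcases hk.lt_or_eq with hk | rfl
    · rw [hf k (by omega), hg k (by omega)]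
      simp only [map_add, coeff_succ_X_mul, coeff_C_mul, ih (k - 1) (by omega), ih (k + 1) hk]
    · rw [hf_top, hg_top]

lemma isUnit_hAux (w k : ℕ) : IsUnit (hAux w k) := by
  rw [isUnit_iff_constantCoeff]
  cases k <;> simp [hAux, pow_two]

/-- `cfTail w i = 1 / h_{i+1}`. -/
noncomputable def cfTail (w i : ℕ) : PowerSeries (Polynomial ℤ) := Ring.inverse (hAux w (w - i))

lemma cfTail_zero (w : ℕ) : cfTail w 0 = Gcf w := rfl

lemma cfTail_self (w : ℕ) : cfTail w w = 1 := by
  simp [cfTail, hAux]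

lemma cfTail_eq {w i : ℕ} (hi : i < w) :
    cfTail w i = 1 + C (qInt (i + 1) * qInt (i + 2)) * X ^ 2 * cfTail w (i + 1) * cfTail w i := by
  have hlevel :
      hAux w (w - i) = 1 - C (qInt (i + 1) * qInt (i + 2)) * X ^ 2 * cfTail w (i + 1) := by
    obtain ⟨k, hk⟩ : ∃ k, w - i = k + 1 := ⟨w - i - 1, by omega⟩
    rw [hk, hAux, cfTail, show w - k = i + 1 by omega, show w - (i + 1) = k by omega]
  have hinv : hAux w (w - i) * cfTail w i = 1 := Ring.mul_inverse_cancel _ (isUnit_hAux w _)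
  rw [hlevel] at hinv
  linear_combination hinv

noncomputable def qFactorial (m : ℕ) : Polynomial ℤ := ∏ i ∈ range m, qInt (i + 1)

/-- The paths from `0` to `m` that reach `m` only at their last step: an excursion confined to
`[i, w]` at each level `i < m`, followed by an up step of weight `[i+1]_q`. -/
noncomputable def firstPassageGF (w m : ℕ) : PowerSeries (Polynomial ℤ) :=
  X ^ m * C (qFactorial m) * ∏ i ∈ range m, cfTail w i

lemma firstPassageGF_zero (w : ℕ) : firstPassageGF w 0 = 1 := by
  simp [firstPassageGF, qFactorial]

lemma firstPassageGF_succ (w m : ℕ) :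
    firstPassageGF w (m + 1) = X * C (qInt (m + 1)) * firstPassageGF w m * cfTail w m := by
  simp only [firstPassageGF, qFactorial, prod_range_succ, map_mul]
  ring

noncomputable def boundedPathGFFormula (w m : ℕ) : PowerSeries (Polynomial ℤ) :=
  if m ≤ w then firstPassageGF w m * cfTail w m else 0

lemma boundedPathGFFormula_eq {w k : ℕ} (hk : k ≤ w) :
    boundedPathGFFormula w k = (if k = 0 then 1 else 0) +
      X * (C (qInt k) * boundedPathGFFormula w (k - 1) +
        C (qInt (k + 2)) * boundedPathGFFormula w (k + 1)) := by
  have hlower : (if k = 0 then 1 else 0) + X * C (qInt k) * boundedPathGFFormula w (k - 1) =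
      firstPassageGF w k := by
    rcases k with _ | m
    · simp [qInt_zero, firstPassageGF_zero]
    · simp [boundedPathGFFormula, show m ≤ w by omega, firstPassageGF_succ, mul_assoc]
  have hupper : X * C (qInt (k + 2)) * boundedPathGFFormula w (k + 1) =
      firstPassageGF w k * (cfTail w k - 1) := by
    rcases hk.lt_or_eq with hk | rfl
    · rw [cfTail_eq hk, boundedPathGFFormula, if_pos hk.nat_succ_le, firstPassageGF_succ, map_mul]
      ring
    · simp [boundedPathGFFormula, cfTail_self]
  rw [boundedPathGFFormula, if_pos hk]
  linear_combination hlower.symm + hupper.symm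

lemma boundedPathGF_eq_firstPassageGF_mul_cfTail {w k : ℕ} (hk : k ≤ w) :
    boundedPathGF w k = firstPassageGF w k * cfTail w k := by
  have h := eq_of_tridiagonal_recurrence (boundedPathGF_of_lt w.lt_succ_self)
    (if_neg (by omega) : boundedPathGFFormula w (w + 1) = 0)
    (fun _ => boundedPathGF_eq) (fun _ => boundedPathGFFormula_eq) hk
  rwa [boundedPathGFFormula, if_pos hk] at h

/-- For every integer `w ≥ 0`, the generating function of tangent-type path diagrams in a
slit of width `w` equals the finite continued fraction `G_w(t,q)`. -/
theorem tangent_pathDiagrams_eq_continuedFraction (w : ℕ) :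
    tangentGF w = Gcf w := by
  calc tangentGF w = boundedPathGF w 0 := ext (coeff_tangentGF w)
    _ = Gcf w := by
      rw [boundedPathGF_eq_firstPassageGF_mul_cfTail w.zero_le, firstPassageGF_zero, one_mul,
        cfTail_zero]
end

section
/- Let q, λ ∈ ℂ with |q| < 1, λ ≠ 0, 1 + λ² ≠ 0, and suppose λ²q^k ≠ 1 and λ² ≠ q^k for all integers k ≥ 1. Set α = λ/(1+λ²) and λ̄ = 1/λ, and let P_w, Q_w be given by the recurrences with this α. Let w ≥ 0 be an integer, and set A_w = λ̄^w φ(λ,q³) φ(λ̄,q^{w+3}) − λ^w φ(λ̄,q³) φ(λ,q^{w+3}) and D_w = (1+λ²)[λ̄^w φ(λ,q²) φ(λ̄,q^{w+3}) − λ^{w+2} φ(λ̄,q²) φ(λ,q^{w+3})]. If Q_w ≠ 0, D_w ≠ 0 and D_w ≠ λ²(1−q)A_w, then P_w/Q_w = 1 / (1 − λ²(1−q)A_w / D_w). -/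
/-!
STATEMENT 4 (Theorem 1, q-tangent case): the convergents `P_w / Q_w` of the continued
fraction are given explicitly in terms of the basic hypergeometric series `φ`.
-/

open Complex

/-- The `q`-Pochhammer symbol `(a;q)_k = ∏_{j=0}^{k-1} (1 - a q^j)`. -/
noncomputable def qPoch (a q : ℂ) (k : ℕ) : ℂ := ∏ j ∈ Finset.range k, (1 - a * q ^ j)

/-- `φ(λ,x) = Σ_k (-λ²;q²)_k x^k / ((q;q)_k (λ²q;q)_k) = ₂φ₁(iλ, -iλ; λ²q; q, x)`. -/
noncomputable def phi (q lam x : ℂ) : ℂ :=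
  ∑' k : ℕ, qPoch (-lam ^ 2) (q ^ 2) k * x ^ k / (qPoch q q k * qPoch (lam ^ 2 * q) q k)

/-- `Pseq α q (w+1) = P_w`: `P_{-1} = 0`, `P_0 = 1`, and
`P_w = P_{w-1} - α²(1-q^w)(1-q^{w+1}) P_{w-2}` for `w ≥ 1`. -/
noncomputable def Pseq (α q : ℂ) : ℕ → ℂ
  | 0 => 0
  | 1 => 1
  | n + 2 => Pseq α q (n + 1) - α ^ 2 * (1 - q ^ (n + 1)) * (1 - q ^ (n + 2)) * Pseq α q n

/-- `Qseq α q (w+1) = Q_w`: `Q_{-1} = 1`, `Q_0 = 1`, and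
`Q_w = Q_{w-1} - α²(1-q^w)(1-q^{w+1}) Q_{w-2}` for `w ≥ 1`. -/
noncomputable def Qseq (α q : ℂ) : ℕ → ℂ
  | 0 => 1
  | 1 => 1
  | n + 2 => Qseq α q (n + 1) - α ^ 2 * (1 - q ^ (n + 1)) * (1 - q ^ (n + 2)) * Qseq α q n

/-!
Two solutions of the recurrence satisfied by `P` and `Q` are
`U n = (λ²/(1+λ²))ⁿ (q;q)ₙ φ(λ, q^{n+2})` and the same with `λ` replaced by `1/λ`;
this is the contiguous relation `(1-x) φ(x) + μ²(1-x) φ(q²x) = (1+μ²) φ(qx)`, itself a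
termwise identity between the coefficients of the series. Since `P` and `Q` are the
solutions with initial values `(0, 1)` and `(1, 1)`, the Casoratians `U₀Vₙ - V₀Uₙ` and
`U₁Vₙ - V₁Uₙ` express `Pₙ` and `Qₙ` through `U` and `V`, and evaluating them at `n = w + 1`
gives `D` and `λ²(1-q)A` up to one common factor.
-/

lemma qPoch_succ (a q : ℂ) (k : ℕ) :
    qPoch a q (k + 1) = qPoch a q k * (1 - a * q ^ k) :=
  Finset.prod_range_succ _ _

@[simp]
lemma qPoch_zero (a q : ℂ) : qPoch a q 0 = 1 := Finset.prod_range_zero _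

@[simp]
lemma qPoch_one (a q : ℂ) : qPoch a q 1 = 1 - a := by simp [qPoch]

lemma pow_ne_one_of_norm_lt_one {q : ℂ} (hq : ‖q‖ < 1) {k : ℕ} (hk : k ≠ 0) :
    q ^ k ≠ 1 := by
  intro h
  have : ‖q‖ ^ k < 1 := pow_lt_one₀ (norm_nonneg q) hq hk
  rw [← norm_pow, h, norm_one] at this
  exact this.false

lemma one_sub_mul_pow_ne_zero {q : ℂ} (hq : ‖q‖ < 1) (k : ℕ) : 1 - q * q ^ k ≠ 0 :=
  sub_ne_zero.2 (pow_succ' q k ▸ pow_ne_one_of_norm_lt_one hq k.succ_ne_zero).symm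

lemma one_sub_mul_mul_pow_ne_zero {a q : ℂ} (h : ∀ k : ℕ, 1 ≤ k → a * q ^ k ≠ 1) (k : ℕ) :
    1 - a * q * q ^ k ≠ 0 :=
  sub_ne_zero.2 (mul_assoc a q _ ▸ pow_succ' q k ▸ h (k + 1) (by omega)).symm

lemma qPoch_self_ne_zero {q : ℂ} (hq : ‖q‖ < 1) (n : ℕ) : qPoch q q n ≠ 0 :=
  Finset.prod_ne_zero_iff.2 fun j _ => one_sub_mul_pow_ne_zero hq j

lemma qPoch_mul_ne_zero {a q : ℂ} (h : ∀ k : ℕ, 1 ≤ k → a * q ^ k ≠ 1) (n : ℕ) :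
    qPoch (a * q) q n ≠ 0 :=
  Finset.prod_ne_zero_iff.2 fun j _ => one_sub_mul_mul_pow_ne_zero h j

noncomputable def phiCoeff (q μ : ℂ) (k : ℕ) : ℂ :=
  qPoch (-μ ^ 2) (q ^ 2) k / (qPoch q q k * qPoch (μ ^ 2 * q) q k)

section phi

variable {q μ : ℂ} (hq : ‖q‖ < 1) (hμ : ∀ k : ℕ, 1 ≤ k → μ ^ 2 * q ^ k ≠ 1)
include hq hμ

lemma phiCoeff_succ (k : ℕ) :
    phiCoeff q μ (k + 1) * ((1 - q ^ (k + 1)) * (1 - μ ^ 2 * q ^ (k + 1))) =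
      phiCoeff q μ k * (1 + μ ^ 2 * q ^ (2 * k)) := by
  have h1 := one_sub_mul_pow_ne_zero hq k
  have h2 := one_sub_mul_mul_pow_ne_zero hμ k
  have h3 := qPoch_self_ne_zero hq k
  have h4 := qPoch_mul_ne_zero hμ k
  rw [phiCoeff, phiCoeff, qPoch_succ, qPoch_succ, qPoch_succ, pow_mul, pow_succ', ← mul_assoc]
  field_simp
  ring

open Filter Topology in
lemma summable_phiCoeff_mul_pow {x : ℂ} (hx : ‖x‖ < 1) :
    Summable fun k => phiCoeff q μ k * x ^ k := by
  obtain ⟨r, hxr, hr1⟩ := exists_between hx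
  refine summable_of_ratio_norm_eventually_le hr1 ?_
  let ρ : ℂ → ℂ := fun t => x * (1 + μ ^ 2 * t ^ 2) / ((1 - q * t) * (1 - μ ^ 2 * q * t))
  have hρ : Tendsto (fun k : ℕ => ‖ρ (q ^ k)‖) atTop (𝓝 ‖x‖) := by
    have : ContinuousAt ρ 0 := by fun_prop (disch := norm_num)
    simpa [ρ] using (this.tendsto.comp (tendsto_pow_atTop_nhds_zero_of_norm_lt_one hq)).norm
  filter_upwards [hρ.eventually_lt_const hxr] with k hk
  have hstep : phiCoeff q μ (k + 1) * x ^ (k + 1) = ρ (q ^ k) * (phiCoeff q μ k * x ^ k) := by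
    have := phiCoeff_succ hq hμ k
    rw [pow_succ' q k, pow_mul', ← mul_assoc (μ ^ 2)] at this
    rw [div_mul_eq_mul_div, eq_div_iff
      (mul_ne_zero (one_sub_mul_pow_ne_zero hq k) (one_sub_mul_mul_pow_ne_zero hμ k))]
    linear_combination x ^ (k + 1) * this
  rw [hstep, norm_mul]
  gcongr

lemma hasSum_phi {x : ℂ} (hx : ‖x‖ < 1) :
    HasSum (fun k => phiCoeff q μ k * x ^ k) (phi q μ x) := by
  simpa only [phi, phiCoeff, div_mul_eq_mul_div] using
    (summable_phiCoeff_mul_pow hq hμ hx).hasSum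

lemma phi_contiguous {x : ℂ} (hx : ‖x‖ < 1) :
    (1 - x) * phi q μ x + μ ^ 2 * (1 - x) * phi q μ (q ^ 2 * x) =
      (1 + μ ^ 2) * phi q μ (q * x) := by
  have hq1 : ‖q‖ ≤ 1 := hq.le
  have hqx : ‖q * x‖ < 1 := by rw [norm_mul]; nlinarith [norm_nonneg q, norm_nonneg x]
  have hq2x : ‖q ^ 2 * x‖ < 1 := by
    rw [norm_mul, norm_pow]; nlinarith [norm_nonneg q, norm_nonneg x]
  have h0 := hasSum_phi hq hμ hx
  have h1 := hasSum_phi hq hμ hqx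
  have h2 := hasSum_phi hq hμ hq2x
  -- with `c = phiCoeff q μ`: the left side is `∑ c_k (1 - q^k)(1 - μ²q^k) x^k`, whose `k = 0`
  -- term vanishes and whose shift is `x ∑ c_k (1 + μ²q^{2k}) x^k` by `phiCoeff_succ`
  have hlhs := (h0.sub (h1.mul_left (1 + μ ^ 2))).add (h2.mul_left (μ ^ 2))
  have hrhs := (h0.add (h2.mul_left (μ ^ 2))).mul_left x
  rw [← hasSum_nat_add_iff' 1] at hlhs
  have hterm : ∀ k : ℕ, phiCoeff q μ (k + 1) * x ^ (k + 1)
      - (1 + μ ^ 2) * (phiCoeff q μ (k + 1) * (q * x) ^ (k + 1))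
      + μ ^ 2 * (phiCoeff q μ (k + 1) * (q ^ 2 * x) ^ (k + 1)) =
      x * (phiCoeff q μ k * x ^ k + μ ^ 2 * (phiCoeff q μ k * (q ^ 2 * x) ^ k)) := by
    intro k
    simp only [mul_pow, ← pow_mul]
    linear_combination x ^ (k + 1) * phiCoeff_succ hq hμ k
  simp only [hterm, Finset.range_one, Finset.sum_singleton, pow_zero] at hlhs
  linear_combination hlhs.unique hrhs

end phi

def IsContinuantSolution (α q : ℂ) (Z : ℕ → ℂ) : Prop :=
  ∀ n, Z (n + 2) = Z (n + 1) - α ^ 2 * (1 - q ^ (n + 1)) * (1 - q ^ (n + 2)) * Z n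

def casoratian (U V : ℕ → ℂ) (m n : ℕ) : ℂ := U m * V n - V m * U n

namespace IsContinuantSolution

variable {α q : ℂ} {U V Z : ℕ → ℂ}

lemma linearCombination (hU : IsContinuantSolution α q U) (hV : IsContinuantSolution α q V)
    (a b : ℂ) : IsContinuantSolution α q fun n => a * U n + b * V n := fun n => by
  simp only [hU n, hV n]; ring

lemma eq_Pseq_Qseq (hZ : IsContinuantSolution α q Z) (n : ℕ) :
    Z n = Z 0 * (Qseq α q n - Pseq α q n) + Z 1 * Pseq α q n := by
  induction n using Nat.twoStepInduction with
  | zero => simp [Pseq, Qseq]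
  | one => simp [Pseq, Qseq]
  | more n ih₀ ih₁ =>
    rw [hZ n, Pseq, Qseq]
    linear_combination ih₁ - α ^ 2 * (1 - q ^ (n + 1)) * (1 - q ^ (n + 2)) * ih₀

lemma casoratian_eq (hU : IsContinuantSolution α q U) (hV : IsContinuantSolution α q V)
    (m n : ℕ) : casoratian U V m n =
      casoratian U V m 0 * (Qseq α q n - Pseq α q n) + casoratian U V m 1 * Pseq α q n := by
  simpa only [casoratian, sub_eq_add_neg, neg_mul] using
    (hV.linearCombination hU (U m) (-V m)).eq_Pseq_Qseq n

lemma Pseq_div_Qseq (hU : IsContinuantSolution α q U) (hV : IsContinuantSolution α q V)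
    {n : ℕ} (hn : casoratian U V 0 n ≠ 0) :
    Pseq α q n / Qseq α q n =
      casoratian U V 0 n / (casoratian U V 0 n - casoratian U V 1 n) := by
  have h₀ := casoratian_eq hU hV 0 n
  have h₁ := casoratian_eq hU hV 1 n
  set W := casoratian U V 0 1
  have hP : casoratian U V 0 n = W * Pseq α q n := by
    rw [h₀, casoratian, mul_comm (V 0), sub_self, zero_mul, zero_add]
  have hQ : casoratian U V 0 n - casoratian U V 1 n = W * Qseq α q n := by
    rw [h₀, h₁]; simp only [W, casoratian]; ring
  rw [hQ, hP, mul_div_mul_left _ _ (left_ne_zero_of_mul (hP ▸ hn))]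

end IsContinuantSolution

noncomputable def qTangentSol (q μ : ℂ) (n : ℕ) : ℂ :=
  (μ ^ 2 / (1 + μ ^ 2)) ^ n * qPoch q q n * phi q μ (q ^ (n + 2))

lemma isContinuantSolution_qTangentSol {q μ : ℂ} (hq : ‖q‖ < 1)
    (hμ : ∀ k : ℕ, 1 ≤ k → μ ^ 2 * q ^ k ≠ 1) :
    IsContinuantSolution (μ / (1 + μ ^ 2)) q (qTangentSol q μ) := by
  intro n
  have hc := phi_contiguous hq hμ (x := q ^ (n + 2))
    (by rw [norm_pow]; exact pow_lt_one₀ (norm_nonneg q) hq (by omega))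
  rw [show q * q ^ (n + 2) = q ^ (n + 3) by ring, ← pow_add, add_comm 2] at hc
  set s := (1 + μ ^ 2)⁻¹
  -- also true in the junk case `1 + μ² = 0`, where `s = 0`
  have hs : s * (1 + μ ^ 2) * s = s := by simpa [s] using mul_inv_mul_cancel s
  simp only [qTangentSol, qPoch_succ, div_eq_mul_inv]
  linear_combination (μ ^ 2 * s) ^ n * qPoch q q n * (1 - q ^ (n + 1)) * μ ^ 2 *
    (s ^ 2 * hc + phi q μ (q ^ (n + 3)) * hs)

lemma inv_div_one_add_inv_sq {K : Type*} [Field K] (x : K) :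
    x⁻¹ / (1 + x⁻¹ ^ 2) = x / (1 + x ^ 2) := by
  rcases eq_or_ne x 0 with rfl | hx
  · simp
  · rw [show 1 + x⁻¹ ^ 2 = (1 + x ^ 2) / x ^ 2 by field_simp; ring, div_div_eq_mul_div]
    field_simp

lemma inv_sq_div_one_add_inv_sq {K : Type*} [Field K] {x : K} (hx : x ≠ 0) :
    x⁻¹ ^ 2 / (1 + x⁻¹ ^ 2) = (1 + x ^ 2)⁻¹ := by
  rw [← mul_div_mul_left _ _ (pow_ne_zero 2 hx)]
  field_simp
  ring

theorem convergents_qTangent_general (q lam : ℂ) (hq : ‖q‖ < 1) (hlam : lam ≠ 0)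
    (hlam2 : 1 + lam ^ 2 ≠ 0)
    (hk : ∀ k : ℕ, 1 ≤ k → lam ^ 2 * q ^ k ≠ 1 ∧ lam ^ 2 ≠ q ^ k)
    (w : ℕ) (A D : ℂ)
    (hA : A = (1 / lam) ^ w * phi q lam (q ^ 3) * phi q (1 / lam) (q ^ (w + 3))
        - lam ^ w * phi q (1 / lam) (q ^ 3) * phi q lam (q ^ (w + 3)))
    (hD : D = (1 + lam ^ 2) *
        ((1 / lam) ^ w * phi q lam (q ^ 2) * phi q (1 / lam) (q ^ (w + 3))
          - lam ^ (w + 2) * phi q (1 / lam) (q ^ 2) * phi q lam (q ^ (w + 3))))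
    (hD0 : D ≠ 0) :
    Pseq (lam / (1 + lam ^ 2)) q (w + 1) / Qseq (lam / (1 + lam ^ 2)) q (w + 1)
      = 1 / (1 - lam ^ 2 * (1 - q) * A / D) := by
  have hU := isContinuantSolution_qTangentSol hq fun k hk₁ => (hk k hk₁).1
  have hV := isContinuantSolution_qTangentSol (μ := 1 / lam) hq fun k hk₁ h =>
    (hk k hk₁).2 (by field_simp at h; exact h.symm)
  rw [one_div, inv_div_one_add_inv_sq] at hV
  set γ := qPoch q q (w + 1) * lam ^ w / (1 + lam ^ 2) ^ (w + 2)
  have hγ : γ ≠ 0 := by have := qPoch_self_ne_zero hq (w + 1); positivity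
  have h₀ : casoratian (qTangentSol q lam) (qTangentSol q lam⁻¹) 0 (w + 1) = γ * D := by
    simp only [γ, hD, one_div, casoratian, qTangentSol, inv_sq_div_one_add_inv_sq hlam, qPoch_zero]
    simp only [div_pow, inv_pow]
    field_simp
    ring
  have h₁ : casoratian (qTangentSol q lam) (qTangentSol q lam⁻¹) 1 (w + 1) =
      γ * (lam ^ 2 * (1 - q) * A) := by
    simp only [γ, hA, one_div, casoratian, qTangentSol, inv_sq_div_one_add_inv_sq hlam, qPoch_one]
    simp only [div_pow, inv_pow]
    field_simp
    ring
  rw [IsContinuantSolution.Pseq_div_Qseq hU hV (h₀ ▸ mul_ne_zero hγ hD0), h₀, h₁,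
    ← mul_sub, mul_div_mul_left _ _ hγ, one_sub_div hD0, one_div_div]

theorem convergents_qTangent (q lam : ℂ) (hq : ‖q‖ < 1) (hlam : lam ≠ 0)
    (hlam2 : 1 + lam ^ 2 ≠ 0)
    (hk : ∀ k : ℕ, 1 ≤ k → lam ^ 2 * q ^ k ≠ 1 ∧ lam ^ 2 ≠ q ^ k)
    (w : ℕ) (A D : ℂ)
    (hA : A = (1 / lam) ^ w * phi q lam (q ^ 3) * phi q (1 / lam) (q ^ (w + 3))
        - lam ^ w * phi q (1 / lam) (q ^ 3) * phi q lam (q ^ (w + 3)))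
    (hD : D = (1 + lam ^ 2) *
        ((1 / lam) ^ w * phi q lam (q ^ 2) * phi q (1 / lam) (q ^ (w + 3))
          - lam ^ (w + 2) * phi q (1 / lam) (q ^ 2) * phi q lam (q ^ (w + 3))))
    (hQ : Qseq (lam / (1 + lam ^ 2)) q (w + 1) ≠ 0)
    (hD0 : D ≠ 0) (hDA : D ≠ lam ^ 2 * (1 - q) * A) :
    Pseq (lam / (1 + lam ^ 2)) q (w + 1) / Qseq (lam / (1 + lam ^ 2)) q (w + 1)
      = 1 / (1 - lam ^ 2 * (1 - q) * A / D) :=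
  convergents_qTangent_general q lam hq hlam hlam2 hk w A D hA hD hD0
end

section
/- Let x, q ∈ ℂ with |x| < 1, |q| < 1, x ≠ 0, x ≠ 1, and 1 + x q^k ≠ 0 for all integers k ≥ 0. Let S = Σ_{k=0}^∞ x^k/(1 + x q^k). Then Σ_{k=0}^∞ (1 − q^{k+1}) x^k / (1 + x q^{k+1}) = (x² S − S + 1) / (x² (x − 1)), all series converging absolutely. -/
/-!
Partial fractions in `y = q^(k+1)`: `(1 - y) / (1 + x y) = -1/x + (1 + x) / (x (1 + x y))`.
Multiplying by `x^k` splits the series into a geometric series and `(1 + x)/x²` times the tail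
`S - 1/(1 + x)` of `S`. Absolute convergence holds because `1 + x q^k → 1`.
-/

open Filter Topology

lemma summable_norm_mul_of_tendsto {F : Type*} [NormedRing F] [NormMulClass F]
    {f g : ℕ → F} (hf : Summable (‖f ·‖)) {c : F} (hg : Tendsto g atTop (𝓝 c)) :
    Summable fun n ↦ ‖f n * g n‖ := by
  simp_rw [norm_mul]
  exact Summable.mul_tendsto_const (by simpa using hf) (Nat.cofinite_eq_atTop ▸ hg.norm)

section

variable {K : Type*} [NormedField K] {q : K}

lemma tendsto_one_add_mul_pow (hq : ‖q‖ < 1) (x : K) :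
    Tendsto (fun k : ℕ ↦ 1 + x * q ^ k) atTop (𝓝 1) := by
  simpa using tendsto_const_nhds.add
    (tendsto_const_nhds.mul (tendsto_pow_atTop_nhds_zero_of_norm_lt_one hq))

lemma summable_norm_pow_div_one_add_mul_pow {x : K} (hx : ‖x‖ < 1) (hq : ‖q‖ < 1) :
    Summable fun k : ℕ ↦ ‖x ^ k / (1 + x * q ^ k)‖ := by
  simp_rw [div_eq_mul_inv]
  exact summable_norm_mul_of_tendsto (summable_norm_geometric_of_norm_lt_one hx)
    ((tendsto_one_add_mul_pow hq x).inv₀ one_ne_zero)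

lemma summable_norm_one_sub_pow_mul_pow_div {x : K} (hx : ‖x‖ < 1) (hq : ‖q‖ < 1) :
    Summable fun k : ℕ ↦ ‖(1 - q ^ (k + 1)) * x ^ k / (1 + x * q ^ (k + 1))‖ := by
  have hlim : Tendsto (fun k : ℕ ↦ (1 - q ^ (k + 1)) / (1 + x * q ^ (k + 1))) atTop (𝓝 1) := by
    have h := (tendsto_one_add_mul_pow hq (-1)).div (tendsto_one_add_mul_pow hq x) one_ne_zero
    simpa [sub_eq_add_neg, Function.comp_def] using h.comp (tendsto_add_atTop_nat 1)
  simpa only [mul_comm, mul_div_assoc] using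
    summable_norm_mul_of_tendsto (summable_norm_geometric_of_norm_lt_one hx) hlim

end

lemma one_sub_mul_pow_div_one_add_mul_eq {K : Type*} [Field K] {x y : K} (hx : x ≠ 0)
    (hxy : 1 + x * y ≠ 0) (k : ℕ) :
    (1 - y) * x ^ k / (1 + x * y)
      = -x⁻¹ * x ^ k + (x + 1) / x ^ 2 * (x ^ (k + 1) / (1 + x * y)) := by
  have hyx : 1 + y * x ≠ 0 := by rwa [mul_comm]
  field_simp
  ring

theorem partialFractions_qTangent_general (x q : ℂ) (hx : ‖x‖ < 1)
    (hq : ‖q‖ < 1) (hx0 : x ≠ 0)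
    (hden : ∀ k : ℕ, 1 + x * q ^ k ≠ 0) :
    (Summable fun k : ℕ => ‖x ^ k / (1 + x * q ^ k)‖) ∧
    (Summable fun k : ℕ => ‖(1 - q ^ (k + 1)) * x ^ k / (1 + x * q ^ (k + 1))‖) ∧
    ∑' k : ℕ, (1 - q ^ (k + 1)) * x ^ k / (1 + x * q ^ (k + 1))
      = (x ^ 2 * (∑' k : ℕ, x ^ k / (1 + x * q ^ k))
          - (∑' k : ℕ, x ^ k / (1 + x * q ^ k)) + 1) / (x ^ 2 * (x - 1)) := by
  have hS := summable_norm_pow_div_one_add_mul_pow hx hq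
  refine ⟨hS, summable_norm_one_sub_pow_mul_pow_div hx hq, ?_⟩
  have hshift : ∑' k : ℕ, x ^ k / (1 + x * q ^ k)
      = 1 / (1 + x) + ∑' k : ℕ, x ^ (k + 1) / (1 + x * q ^ (k + 1)) := by
    simpa using hS.of_norm.tsum_eq_zero_add
  have h1x : 1 + x ≠ 0 := by simpa using hden 0
  have hx_ne_one : x ≠ 1 := fun h ↦ by simp [h] at hx
  have h1x' : 1 - x ≠ 0 := sub_ne_zero.mpr hx_ne_one.symm
  rw [tsum_congr fun k ↦ one_sub_mul_pow_div_one_add_mul_eq hx0 (hden (k + 1)) k,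
    Summable.tsum_add ((summable_geometric_of_norm_lt_one hx).mul_left _)
      (((summable_nat_add_iff 1).mpr hS.of_norm).mul_left _),
    tsum_mul_left, tsum_mul_left, tsum_geometric_of_norm_lt_one hx, hshift]
  field_simp
  ring

theorem partialFractions_qTangent (x q : ℂ) (hx : ‖x‖ < 1)
    (hq : ‖q‖ < 1) (hx0 : x ≠ 0) (hx1 : x ≠ 1)
    (hden : ∀ k : ℕ, 1 + x * q ^ k ≠ 0) :
    (Summable fun k : ℕ => ‖x ^ k / (1 + x * q ^ k)‖) ∧
    (Summable fun k : ℕ => ‖(1 - q ^ (k + 1)) * x ^ k / (1 + x * q ^ (k + 1))‖) ∧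
    ∑' k : ℕ, (1 - q ^ (k + 1)) * x ^ k / (1 + x * q ^ (k + 1))
      = (x ^ 2 * (∑' k : ℕ, x ^ k / (1 + x * q ^ k))
          - (∑' k : ℕ, x ^ k / (1 + x * q ^ k)) + 1) / (x ^ 2 * (x - 1)) :=
  partialFractions_qTangent_general x q hx hq hx0 hden
end

section
/- Let q, λ ∈ ℂ with |q| < 1, λ ≠ 0, and suppose λ²q^k ≠ 1 and λ² ≠ q^k for all integers k ≥ 1. Write λ̄ = 1/λ. Then (1 + λ²) [ψ(λ,q²) ψ(λ̄,q³) − λ² ψ(λ̄,q²) ψ(λ,q³)] = (1 − q) [ψ(λ,q) ψ(λ̄,q³) − λ⁴ ψ(λ̄,q) ψ(λ,q³)]. -/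
/-- `ψ(λ,x) = Σ_k (-λ²q;q²)_k x^k / ((q;q)_k (λ²q;q)_k) = ₂φ₁(iλ√q, -iλ√q; λ²q; q, x)`. -/
noncomputable def psi (q lam x : ℂ) : ℂ :=
  ∑' k : ℕ, qPoch (-(lam ^ 2 * q)) (q ^ 2) k * x ^ k / (qPoch q q k * qPoch (lam ^ 2 * q) q k)

open Filter Finset Topology

noncomputable def psiCoeff (q lam : ℂ) (k : ℕ) : ℂ :=
  qPoch (-(lam ^ 2 * q)) (q ^ 2) k / (qPoch q q k * qPoch (lam ^ 2 * q) q k)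

noncomputable def psiRatio (q lam : ℂ) (k : ℕ) : ℂ :=
  (1 + lam ^ 2 * q ^ (2 * k + 1)) / ((1 - q ^ (k + 1)) * (1 - lam ^ 2 * q ^ (k + 1)))

theorem psiCoeff_succ (q lam : ℂ) (k : ℕ) :
    psiCoeff q lam (k + 1) = psiCoeff q lam k * psiRatio q lam k := by
  simp only [psiCoeff, psiRatio, qPoch, prod_range_succ]
  rw [mul_mul_mul_comm, mul_div_mul_comm]
  congr 3 <;> ring

theorem tendsto_psiRatio {q : ℂ} (lam : ℂ) (hq : ‖q‖ < 1) :
    Tendsto (psiRatio q lam) atTop (𝓝 1) := by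
  have hpow := tendsto_pow_atTop_nhds_zero_of_norm_lt_one hq
  have h1 : Tendsto (fun k : ℕ => q ^ (k + 1)) atTop (𝓝 0) :=
    hpow.comp (tendsto_add_atTop_nat 1)
  have h2 : Tendsto (fun k : ℕ => q ^ (2 * k + 1)) atTop (𝓝 0) :=
    hpow.comp (tendsto_atTop_mono (fun k => show k ≤ 2 * k + 1 by omega) tendsto_id)
  unfold psiRatio
  simpa [Pi.div_def] using ((h2.const_mul _).const_add 1).div
    ((h1.const_sub 1).mul ((h1.const_mul _).const_sub 1)) (by simp)

theorem hasSum_psi {q x : ℂ} (lam : ℂ) (hq : ‖q‖ < 1) (hx : ‖x‖ < 1) :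
    HasSum (fun k => psiCoeff q lam k * x ^ k) (psi q lam x) := by
  obtain ⟨r, hxr, hr1⟩ := exists_between hx
  have hratio : ∀ᶠ k in atTop, ‖x * psiRatio q lam k‖ < r := by
    refine (tendsto_order.1 ?_).2 r (by simpa using hxr)
    simpa using ((tendsto_psiRatio lam hq).const_mul x).norm
  have hsum : Summable fun k => psiCoeff q lam k * x ^ k := by
    refine summable_of_ratio_norm_eventually_le hr1 (hratio.mono fun k hk => ?_)
    calc ‖psiCoeff q lam (k + 1) * x ^ (k + 1)‖
        = ‖x * psiRatio q lam k‖ * ‖psiCoeff q lam k * x ^ k‖ := by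
          rw [psiCoeff_succ, ← norm_mul]; congr 1; ring
      _ ≤ r * ‖psiCoeff q lam k * x ^ k‖ := by gcongr
  convert hsum.hasSum using 2 with k
  simp only [psi, psiCoeff, mul_div_right_comm]

theorem psiCoeff_succ_mul {q lam : ℂ} (hq : ‖q‖ < 1)
    (hlam : ∀ k : ℕ, 1 ≤ k → lam ^ 2 * q ^ k ≠ 1) (k : ℕ) :
    psiCoeff q lam (k + 1) * ((1 - q ^ (k + 1)) * (1 - lam ^ 2 * q ^ (k + 1)))
      = psiCoeff q lam k * (1 + lam ^ 2 * q ^ (2 * k + 1)) := by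
  have hq1 : 1 - q ^ (k + 1) ≠ 0 := by
    refine sub_ne_zero.2 fun h => ?_
    have : ‖q ^ (k + 1)‖ < 1 := by
      rw [norm_pow]; exact pow_lt_one₀ (norm_nonneg q) hq k.succ_ne_zero
    simp [← h] at this
  have hlam1 : 1 - lam ^ 2 * q ^ (k + 1) ≠ 0 := sub_ne_zero.2 (hlam (k + 1) le_add_self).symm
  rw [psiCoeff_succ, psiRatio, mul_assoc, div_mul_cancel₀ _ (mul_ne_zero hq1 hlam1)]

theorem psi_qDifference {q lam x : ℂ} (hq : ‖q‖ < 1)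
    (hlam : ∀ k : ℕ, 1 ≤ k → lam ^ 2 * q ^ k ≠ 1) (hx : ‖x‖ < 1) :
    (1 + lam ^ 2) * psi q lam (q * x)
      = (1 - x) * psi q lam x + lam ^ 2 * (1 - q * x) * psi q lam (q ^ 2 * x) := by
  have hqx : ‖q * x‖ < 1 := by
    rw [norm_mul]; exact mul_lt_one_of_nonneg_of_lt_one_left (norm_nonneg q) hq hx.le
  have hq2x : ‖q ^ 2 * x‖ < 1 := by
    rw [sq, mul_assoc, norm_mul]
    exact mul_lt_one_of_nonneg_of_lt_one_left (norm_nonneg q) hq hqx.le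
  have S1 := hasSum_psi lam hq hx
  have Sq := hasSum_psi lam hq hqx
  have Sq2 := hasSum_psi lam hq hq2x
  set a := psiCoeff q lam
  set g : ℕ → ℂ := fun k => a k * x ^ k * ((1 - q ^ k) * (1 - lam ^ 2 * q ^ k)) with hg
  have hg_sum : HasSum g (psi q lam x - (1 + lam ^ 2) * psi q lam (q * x)
      + lam ^ 2 * psi q lam (q ^ 2 * x)) := by
    refine ((S1.sub (Sq.mul_left (1 + lam ^ 2))).add (Sq2.mul_left (lam ^ 2))).congr_fun
      fun k => ?_
    rw [hg]; ring
  have hg_succ_sum : HasSum (fun k => g (k + 1))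
      (x * psi q lam x + lam ^ 2 * q * x * psi q lam (q ^ 2 * x)) := by
    refine ((S1.mul_left x).add (Sq2.mul_left (lam ^ 2 * q * x))).congr_fun fun k => ?_
    rw [hg]
    linear_combination x ^ (k + 1) * psiCoeff_succ_mul hq hlam k
  have := hg_sum.unique ((hasSum_nat_add_iff 1).1 hg_succ_sum)
  simp only [hg, range_one, sum_singleton, pow_zero, sub_self, zero_mul, mul_zero, add_zero] at this
  linear_combination -this

theorem identity_w1_qSecant_general (q lam : ℂ) (hq : ‖q‖ < 1)
    (hk : ∀ k : ℕ, 1 ≤ k → lam ^ 2 * q ^ k ≠ 1 ∧ lam ^ 2 ≠ q ^ k) :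
    (1 + lam ^ 2) *
        (psi q lam (q ^ 2) * psi q (1 / lam) (q ^ 3)
          - lam ^ 2 * psi q (1 / lam) (q ^ 2) * psi q lam (q ^ 3))
      = (1 - q) *
          (psi q lam q * psi q (1 / lam) (q ^ 3)
            - lam ^ 4 * psi q (1 / lam) q * psi q lam (q ^ 3)) := by
  have hq2 : q * q = q ^ 2 := by ring
  have hq3 : q ^ 2 * q = q ^ 3 := by ring
  have eq_lam := psi_qDifference hq (fun k hk' => (hk k hk').1) hq
  rw [hq2, hq3] at eq_lam
  have eq_inv : lam ^ 2 * ((1 + lam ^ 2) * psi q (1 / lam) (q ^ 2)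
      - lam ^ 2 * (1 - q) * psi q (1 / lam) q - (1 - q ^ 2) * psi q (1 / lam) (q ^ 3)) = 0 := by
    rcases eq_or_ne lam 0 with rfl | hlam
    · ring
    have hinv : ∀ k : ℕ, 1 ≤ k → (1 / lam) ^ 2 * q ^ k ≠ 1 := fun k hk' h =>
      (hk k hk').2 (by field_simp at h; exact h.symm)
    have eq_inv := psi_qDifference hq hinv hq
    rw [hq2, hq3] at eq_inv
    field_simp at eq_inv
    linear_combination lam ^ 2 * eq_inv
  linear_combination psi q (1 / lam) (q ^ 3) * eq_lam - psi q lam (q ^ 3) * eq_inv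

theorem identity_w1_qSecant (q lam : ℂ) (hq : ‖q‖ < 1) (hlam : lam ≠ 0)
    (hk : ∀ k : ℕ, 1 ≤ k → lam ^ 2 * q ^ k ≠ 1 ∧ lam ^ 2 ≠ q ^ k) :
    (1 + lam ^ 2) *
        (psi q lam (q ^ 2) * psi q (1 / lam) (q ^ 3)
          - lam ^ 2 * psi q (1 / lam) (q ^ 2) * psi q lam (q ^ 3))
      = (1 - q) *
          (psi q lam q * psi q (1 / lam) (q ^ 3)
            - lam ^ 4 * psi q (1 / lam) q * psi q lam (q ^ 3)) :=
  identity_w1_qSecant_general q lam hq hk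
end
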